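/- arXiv:0804.3678 — 3 statements merged into one kernel-verified Lean document; each statement's English description precedes it below -/
import Mathlib

section
/- For the random walk on ℤ with step probability q ∈ (0,1) started at z, the backward conditional probabilities satisfy, for all values in the support, P(X_j = x_j | X_{j+1} = x_{j+1}) = ((j + x_j - z)/2 + 1)/(j+1) if x_j = x_{j+1} - 1, P(X_j = x_j | X_{j+1} = x_{j+1}) = ((j - x_j + z)/2 + 1)/(j+1) if x_j = x_{j+1} + 1, and P(X_j = x_j | X_{j+1} = x_{j+1}) = 0 otherwise. -/
/-- Backward conditional probabilities of the ±1 random walk on ℤ started at z,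
computed via Bayes' rule from the forward kernel and the binomial marginals.
For x_j = z + 2k - j in the support of X_j:
P(X_j = x_j | X_{j+1} = x_j + 1) = ((j + x_j - z)/2 + 1)/(j+1),
P(X_j = x_j | X_{j+1} = x_j - 1) = ((j - x_j + z)/2 + 1)/(j+1),
and 0 for any other value of X_{j+1}. -/
theorem random_walk_backward_conditional
    (q : ℝ) (hq : 0 < q) (hq1 : q < 1) (z : ℤ)
    (walkProb : ℕ → ℤ → ℝ)
    (hW : ∀ (j k : ℕ), k ≤ j →
      walkProb j (z + 2 * (k : ℤ) - (j : ℤ))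
        = q ^ k * (1 - q) ^ (j - k) * (j.choose k))
    (F : ℤ → ℤ → ℝ)
    (hF : ∀ x' x : ℤ, F x' x =
      if x' = x + 1 then q else if x' = x - 1 then 1 - q else 0)
    (B : ℕ → ℤ → ℤ → ℝ)
    (hB : ∀ (j : ℕ) (x x' : ℤ),
      B j x x' = F x' x * walkProb j x / walkProb (j + 1) x')
    (j k : ℕ) (hkj : k ≤ j) (x : ℤ) (hx : x = z + 2 * (k : ℤ) - (j : ℤ)) :
    B j x (x + 1) = (((j : ℝ) + (x : ℝ) - (z : ℝ)) / 2 + 1) / ((j : ℝ) + 1)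
    ∧ B j x (x - 1) = (((j : ℝ) - (x : ℝ) + (z : ℝ)) / 2 + 1) / ((j : ℝ) + 1)
    ∧ ∀ x' : ℤ, x' ≠ x + 1 → x' ≠ x - 1 → B j x x' = 0 := by
  have hq1' : (0:ℝ) < 1 - q := by linarith
  have hWj : walkProb j x = q ^ k * (1 - q) ^ (j - k) * (j.choose k) := by
    rw [hx]; exact hW j k hkj
  have hx1 : x + 1 = z + 2 * ((k + 1 : ℕ) : ℤ) - ((j + 1 : ℕ) : ℤ) := by
    push_cast; rw [hx]; ring
  have hWj1 : walkProb (j + 1) (x + 1)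
      = q ^ (k + 1) * (1 - q) ^ (j - k) * ((j + 1).choose (k + 1)) := by
    rw [hx1]
    simpa [Nat.succ_sub_succ] using hW (j + 1) (k + 1) (by omega)
  have hx2 : x - 1 = z + 2 * ((k : ℕ) : ℤ) - ((j + 1 : ℕ) : ℤ) := by
    push_cast; rw [hx]; ring
  have hWj2 : walkProb (j + 1) (x - 1)
      = q ^ k * (1 - q) ^ (j + 1 - k) * ((j + 1).choose k) := by
    rw [hx2]; exact hW (j + 1) k (by omega)
  have hc1 : (0:ℝ) < (j.choose k : ℝ) := by
    exact_mod_cast Nat.choose_pos hkj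
  have hc2 : (0:ℝ) < ((j+1).choose (k+1) : ℝ) := by
    exact_mod_cast Nat.choose_pos (by omega)
  have hc3 : (0:ℝ) < ((j+1).choose k : ℝ) := by
    exact_mod_cast Nat.choose_pos (by omega)
  have hxr : (x : ℝ) = (z : ℝ) + 2 * (k : ℝ) - (j : ℝ) := by
    rw [hx]; push_cast; ring
  have hqk : (0:ℝ) < q ^ (k+1) := pow_pos hq _
  have hq1k : (0:ℝ) < (1 - q) ^ (j - k) := pow_pos hq1' _
  have hA : (0:ℝ) < q ^ (k+1) * (1 - q) ^ (j - k) := mul_pos hqk hq1k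
  have hj1 : (0:ℝ) < (j:ℝ) + 1 := by positivity
  refine ⟨?_, ?_, ?_⟩
  · rw [hB, hF, if_pos rfl, hWj, hWj1]
    have hnum : q * (q ^ k * (1 - q) ^ (j - k) * (j.choose k : ℝ))
        = (q ^ (k+1) * (1 - q) ^ (j - k)) * (j.choose k : ℝ) := by ring
    have hden : q ^ (k+1) * (1 - q) ^ (j - k) * ((j+1).choose (k+1) : ℝ)
        = (q ^ (k+1) * (1 - q) ^ (j - k)) * ((j+1).choose (k+1) : ℝ) := by ring
    rw [hnum, hden, mul_div_mul_left _ _ (ne_of_gt hA)]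
    have hR : (((j : ℝ) + (x : ℝ) - (z : ℝ)) / 2 + 1) = (k:ℝ) + 1 := by
      rw [hxr]; ring
    rw [hR, div_eq_div_iff (ne_of_gt hc2) (ne_of_gt hj1)]
    have key : ((j+1 : ℕ) : ℝ) * (j.choose k : ℝ)
        = ((j+1).choose (k+1) : ℝ) * ((k+1 : ℕ) : ℝ) := by
      exact_mod_cast congrArg (Nat.cast : ℕ → ℝ) (Nat.add_one_mul_choose_eq j k)
    push_cast at key
    linarith [key]
  · rw [hB, hF, if_neg (by omega), if_pos rfl, hWj, hWj2]
    have hpow : (1 - q) ^ (j + 1 - k) = (1 - q) ^ (j - k) * (1 - q) := by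
      rw [← pow_succ]; congr 1; omega
    have hA2 : (0:ℝ) < q ^ k * (1 - q) ^ (j + 1 - k) :=
      mul_pos (pow_pos hq _) (pow_pos hq1' _)
    have hnum : (1 - q) * (q ^ k * (1 - q) ^ (j - k) * (j.choose k : ℝ))
        = (q ^ k * (1 - q) ^ (j + 1 - k)) * (j.choose k : ℝ) := by
      rw [hpow]; ring
    have hden : q ^ k * (1 - q) ^ (j + 1 - k) * ((j+1).choose k : ℝ)
        = (q ^ k * (1 - q) ^ (j + 1 - k)) * ((j+1).choose k : ℝ) := by ring
    rw [hnum, hden, mul_div_mul_left _ _ (ne_of_gt hA2)]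
    have hR : (((j : ℝ) - (x : ℝ) + (z : ℝ)) / 2 + 1) = (j:ℝ) - (k:ℝ) + 1 := by
      rw [hxr]; ring
    rw [hR, div_eq_div_iff (ne_of_gt hc3) (ne_of_gt hj1)]
    have key : (j.choose k : ℝ) * ((j+1 : ℕ) : ℝ)
        = ((j+1).choose k : ℝ) * ((j + 1 - k : ℕ) : ℝ) := by
      exact_mod_cast congrArg (Nat.cast : ℕ → ℝ) (Nat.choose_mul_succ_eq j k)
    have hcast : ((j + 1 - k : ℕ) : ℝ) = (j : ℝ) + 1 - (k : ℝ) := by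
      push_cast [Nat.cast_sub (by omega : k ≤ j + 1)]; ring
    rw [hcast] at key
    push_cast at key
    linarith [key]
  · intro x' h1 h2
    rw [hB, hF, if_neg h1, if_neg h2, zero_mul, zero_div]
end

section
/- Let J be a random variable uniform on {1,...,ℓ} and X, Y random variables on finite sets such that, conditionally on J = j, Y has law Q_j and X is obtained from Y by applying a stochastic matrix A_j, where the matrices A_j take only d distinct values B_1, ..., B_d. Then the Shannon mutual informations satisfy I(X:J) ≤ I(Y:J) + log₂ d. -/
/-!
Write `R = r(J)`. Since `I(X:J) = H(X) + H(J) - H(X,J)`, split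
`H(X) - H(X,J) = (H(X) - H(X,R)) + (H(X,R) - H(X,J))`. The first bracket is `≤ 0`. Given `R = k`
every `j` uses the same channel `B_k`, so data processing inside each class gives
`H(X,R) - H(X,J) ≤ H(Y,R) - H(Y,J)`. Finally `H(Y,R) - H(Y) = H(R | Y) ≤ log d`. Data processing
for relative entropy and the bound on `H(R | Y)` both come from the log-sum inequality.
-/

open Finset

/-- Shannon entropy (base 2) of a finite nonnegative vector. -/
noncomputable def ent2 {n : ℕ} (v : Fin n → ℝ) : ℝ :=
  -∑ i, v i * Real.logb 2 (v i)

open Real Matrix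

variable {ι κ α β : Type*} [Fintype α] [Fintype β]

/-- Defined for arbitrary nonnegative vectors: for the joint law `a j x = P(J = j, X = x)`,
`entropy (∑ j, a j)` is `H(X)` and `∑ j, entropy (a j)` is `H(X, J)`. -/
noncomputable def entropy (p : α → ℝ) : ℝ := ∑ x, negMulLog (p x)

noncomputable def relEntropy (p q : α → ℝ) : ℝ := ∑ x, p x * log (p x / q x)

/-- `I(J : X)` when `J` has law `w` and `X` has law `p j` given `J = j`. -/
noncomputable def mutualInfo [Fintype ι] (w : ι → ℝ) (p : ι → α → ℝ) : ℝ :=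
  entropy (∑ j, w j • p j) - ∑ j, w j * entropy (p j)

theorem sum_mul_log_div_sum_le (s : Finset ι) {a b : ι → ℝ} (ha : ∀ i ∈ s, 0 ≤ a i)
    (hb : ∀ i ∈ s, 0 ≤ b i) (hab : ∀ i ∈ s, b i = 0 → a i = 0) :
    (∑ i ∈ s, a i) * log ((∑ i ∈ s, a i) / ∑ i ∈ s, b i) ≤ ∑ i ∈ s, a i * log (a i / b i) := by
  rcases (sum_nonneg ha).eq_or_lt with hA | hA
  · have ha0 : ∀ i ∈ s, a i = 0 := (sum_eq_zero_iff_of_nonneg ha).1 hA.symm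
    rw [← hA, zero_mul, sum_eq_zero fun i hi => by rw [ha0 i hi, zero_mul]]
  have hB : 0 < ∑ i ∈ s, b i := by
    refine (sum_nonneg hb).lt_of_ne fun hB => hA.ne' ?_
    exact sum_eq_zero fun i hi => hab i hi ((sum_eq_zero_iff_of_nonneg hb).1 hB.symm i hi)
  set t := (∑ i ∈ s, a i) / ∑ i ∈ s, b i
  have ht : 0 < t := div_pos hA hB
  -- `1 - 1 / x ≤ log x` at `x = a i / (b i * t)`
  have tangent : ∀ i ∈ s, a i * log t + a i - t * b i ≤ a i * log (a i / b i) := by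
    intro i hi
    rcases (ha i hi).eq_or_lt with h0 | hpos
    · rw [← h0, zero_mul, zero_mul, zero_add, zero_sub, neg_nonpos]
      exact mul_nonneg ht.le (hb i hi)
    have hbpos : 0 < b i := (hb i hi).lt_of_ne fun h => hpos.ne' (hab i hi h.symm)
    have hlog := one_sub_inv_le_log_of_pos (div_pos (div_pos hpos hbpos) ht)
    rw [log_div (div_pos hpos hbpos).ne' ht.ne'] at hlog
    have := mul_le_mul_of_nonneg_left hlog hpos.le
    field_simp at this
    linarith
  calc (∑ i ∈ s, a i) * log t = ∑ i ∈ s, (a i * log t + a i - t * b i) := by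
        have htB : t * ∑ i ∈ s, b i = ∑ i ∈ s, a i := div_mul_cancel₀ _ hB.ne'
        rw [sum_sub_distrib, sum_add_distrib, ← sum_mul, ← mul_sum, htB]
        ring
    _ ≤ ∑ i ∈ s, a i * log (a i / b i) := sum_le_sum tangent

theorem relEntropy_mulVec_le (B : Matrix α β ℝ) (hB0 : ∀ x y, 0 ≤ B x y)
    (hB1 : ∀ y, ∑ x, B x y = 1) {p q : β → ℝ} (hp : ∀ y, 0 ≤ p y) (hq : ∀ y, 0 ≤ q y)
    (hpq : ∀ y, q y = 0 → p y = 0) :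
    relEntropy (B *ᵥ p) (B *ᵥ q) ≤ relEntropy p q := by
  have cancel : ∀ x y, B x y * p y * log (B x y * p y / (B x y * q y))
      = B x y * (p y * log (p y / q y)) := by
    intro x y
    rcases eq_or_ne (B x y) 0 with h | h
    · simp [h]
    · rw [mul_div_mul_left _ _ h, mul_assoc]
  calc relEntropy (B *ᵥ p) (B *ᵥ q) ≤ ∑ x, ∑ y, B x y * (p y * log (p y / q y)) := by
        refine sum_le_sum fun x _ => ?_
        simp only [mulVec, dotProduct, ← cancel]
        refine sum_mul_log_div_sum_le _ (fun y _ => mul_nonneg (hB0 x y) (hp y))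
          (fun y _ => mul_nonneg (hB0 x y) (hq y)) fun y _ h => ?_
        rcases mul_eq_zero.1 h with h | h <;> simp [h, hpq]
    _ = relEntropy p q := by
        rw [sum_comm]
        simp only [relEntropy, ← sum_mul, hB1, one_mul]

theorem entropy_sum_sub_sum_entropy (s : Finset ι) {a : ι → α → ℝ} (ha : ∀ j x, 0 ≤ a j x) :
    entropy (∑ j ∈ s, a j) - ∑ j ∈ s, entropy (a j)
      = ∑ j ∈ s, relEntropy (a j) (∑ i ∈ s, a i) := by
  have split_log : ∀ j ∈ s, ∀ x, a j x * log (a j x / ∑ i ∈ s, a i x)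
      = a j x * log (a j x) - a j x * log (∑ i ∈ s, a i x) := by
    intro j hj x
    rcases (ha j x).eq_or_lt with h | h
    · simp [← h]
    · have hsum : 0 < ∑ i ∈ s, a i x :=
        h.trans_le (single_le_sum (fun i _ => ha i x) hj)
      rw [log_div h.ne' hsum.ne', mul_sub]
  simp only [relEntropy, entropy, negMulLog, Finset.sum_apply]
  rw [sum_congr rfl fun j hj => sum_congr rfl fun x _ => split_log j hj x]
  have hmix : ∑ x, (∑ i ∈ s, a i x) * log (∑ i ∈ s, a i x)
      = ∑ j ∈ s, ∑ x, a j x * log (∑ i ∈ s, a i x) := by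
    simp only [sum_mul]
    exact sum_comm
  simp only [sum_sub_distrib, neg_mul, sum_neg_distrib]
  linarith

theorem entropy_sum_le_sum_entropy (s : Finset ι) {a : ι → α → ℝ} (ha : ∀ j x, 0 ≤ a j x) :
    entropy (∑ j ∈ s, a j) ≤ ∑ j ∈ s, entropy (a j) := by
  have hrel : ∑ j ∈ s, relEntropy (a j) (∑ i ∈ s, a i) ≤ 0 := by
    refine sum_nonpos fun j hj => sum_nonpos fun x _ => ?_
    rw [Finset.sum_apply]
    have hle : a j x ≤ ∑ i ∈ s, a i x := single_le_sum (fun i _ => ha i x) hj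
    have hsum := (ha j x).trans hle
    exact mul_nonpos_of_nonneg_of_nonpos (ha j x)
      (log_nonpos (div_nonneg (ha j x) hsum) (div_le_one_of_le₀ hle hsum))
  linarith [entropy_sum_sub_sum_entropy s ha]

theorem entropy_sum_mulVec_sub_le (s : Finset ι) (B : Matrix α β ℝ) (hB0 : ∀ x y, 0 ≤ B x y)
    (hB1 : ∀ y, ∑ x, B x y = 1) {a : ι → β → ℝ} (ha : ∀ j y, 0 ≤ a j y) :
    entropy (∑ j ∈ s, B *ᵥ a j) - ∑ j ∈ s, entropy (B *ᵥ a j)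
      ≤ entropy (∑ j ∈ s, a j) - ∑ j ∈ s, entropy (a j) := by
  have hBa : ∀ j x, 0 ≤ (B *ᵥ a j) x := fun j x =>
    sum_nonneg fun y _ => mul_nonneg (hB0 x y) (ha j y)
  rw [entropy_sum_sub_sum_entropy s hBa, entropy_sum_sub_sum_entropy s ha, ← mulVec_sum]
  refine sum_le_sum fun j hj => relEntropy_mulVec_le B hB0 hB1 (ha j)
    (fun y => by rw [Finset.sum_apply]; exact sum_nonneg fun i _ => ha i y) fun y hy => ?_
  rw [Finset.sum_apply] at hy
  exact (sum_eq_zero_iff_of_nonneg fun i _ => ha i y).1 hy j hj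

theorem sum_entropy_le_entropy_sum_add_mul_log_card [Fintype κ] {c : κ → β → ℝ}
    (hc : ∀ k y, 0 ≤ c k y) :
    ∑ k, entropy (c k)
      ≤ entropy (∑ k, c k) + (∑ k, ∑ y, c k y) * log (Fintype.card κ) := by
  set n : ℝ := (Fintype.card κ : ℝ)
  set u := ∑ k, c k
  have hu : ∀ y, u y = ∑ k, c k y := fun y => Finset.sum_apply y _ _
  -- `H(K | Y) ≤ log n` fibrewise over `y`, by the log-sum inequality against the constant `u y`
  have hcond : -((∑ k, ∑ y, c k y) * log n) ≤ ∑ k, relEntropy (c k) u := by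
    calc -((∑ k, ∑ y, c k y) * log n) = ∑ y, u y * log (u y / (n * u y)) := by
          rw [sum_comm, sum_mul, ← sum_neg_distrib]
          refine sum_congr rfl fun y _ => ?_
          rw [← hu]
          rcases eq_or_ne (u y) 0 with h | h
          · simp [h]
          · rw [div_mul_cancel_right₀ h, log_inv, mul_neg]
      _ ≤ ∑ y, ∑ k, c k y * log (c k y / u y) := by
          refine sum_le_sum fun y _ => ?_
          have := sum_mul_log_div_sum_le univ (fun k _ => hc k y)
            (fun _ _ => (hu y).symm ▸ sum_nonneg fun k _ => hc k y)
            fun k _ h => (sum_eq_zero_iff_of_nonneg fun i _ => hc i y).1 (hu y ▸ h) k (mem_univ k)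
          simpa only [sum_const, card_univ, nsmul_eq_mul, ← hu] using this
      _ = ∑ k, relEntropy (c k) u := sum_comm
  linarith [entropy_sum_sub_sum_entropy univ hc]

theorem entropy_sum_mulVec_sub_le_add_log_card [Fintype ι] [Fintype κ] [DecidableEq κ]
    {a : ι → β → ℝ} (ha : ∀ j y, 0 ≤ a j y) {A : ι → Matrix α β ℝ}
    (hA0 : ∀ j x y, 0 ≤ A j x y) (hA1 : ∀ j y, ∑ x, A j x y = 1) (r : ι → κ)
    (hr : ∀ i j, r i = r j → A i = A j) :
    entropy (∑ j, A j *ᵥ a j) - ∑ j, entropy (A j *ᵥ a j)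
      ≤ entropy (∑ j, a j) - ∑ j, entropy (a j) + (∑ j, ∑ y, a j y) * log (Fintype.card κ) := by
  have hAa : ∀ j x, 0 ≤ (A j *ᵥ a j) x := fun j x =>
    sum_nonneg fun y _ => mul_nonneg (hA0 j x y) (ha j y)
  have hX : entropy (∑ j, A j *ᵥ a j) ≤ ∑ k, entropy (∑ j with r j = k, A j *ᵥ a j) := by
    rw [← sum_fiberwise univ r]
    exact entropy_sum_le_sum_entropy univ fun k x => by
      rw [Finset.sum_apply]; exact sum_nonneg fun j _ => hAa j x
  have hY : ∑ k, entropy (∑ j with r j = k, a j)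
      ≤ entropy (∑ j, a j) + (∑ j, ∑ y, a j y) * log (Fintype.card κ) := by
    have := sum_entropy_le_entropy_sum_add_mul_log_card (c := fun k => ∑ j with r j = k, a j)
      fun k y => by rw [Finset.sum_apply]; exact sum_nonneg fun j _ => ha j y
    simpa only [sum_fiberwise, Finset.sum_apply, sum_comm (γ := β)] using this
  -- given `r j = k` the channel is one fixed matrix, so data processing applies class by class
  have hfiber : ∀ k,
      entropy (∑ j with r j = k, A j *ᵥ a j) - ∑ j with r j = k, entropy (A j *ᵥ a j)
      ≤ entropy (∑ j with r j = k, a j) - ∑ j with r j = k, entropy (a j) := by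
    intro k
    rcases (univ.filter (r · = k)).eq_empty_or_nonempty with h | ⟨i, hi⟩
    · simp [h, entropy]
    have hAi : ∀ j ∈ univ.filter (r · = k), A j = A i := fun j hj =>
      hr j i ((mem_filter.1 hj).2.trans (mem_filter.1 hi).2.symm)
    rw [sum_congr rfl fun j hj => congrArg (· *ᵥ a j) (hAi j hj),
      sum_congr rfl fun j hj => congrArg (fun M => entropy (M *ᵥ a j)) (hAi j hj)]
    exact entropy_sum_mulVec_sub_le _ (A i) (hA0 i) (hA1 i) ha
  have hsum := sum_le_sum fun k (_ : k ∈ univ) => hfiber k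
  simp only [sum_sub_distrib, sum_fiberwise] at hsum
  linarith

theorem entropy_smul (c : ℝ) (p : α → ℝ) :
    entropy (c • p) = c * entropy p + (∑ x, p x) * negMulLog c := by
  simp only [entropy, Pi.smul_apply, smul_eq_mul, negMulLog_mul, sum_add_distrib, ← mul_sum,
    ← sum_mul]
  ring

theorem mutualInfo_eq_add_entropy [Fintype ι] (w : ι → ℝ) {p : ι → α → ℝ}
    (hp : ∀ j, ∑ x, p j x = 1) :
    mutualInfo w p = entropy (∑ j, w j • p j) - ∑ j, entropy (w j • p j) + entropy w := by
  simp only [mutualInfo, entropy_smul, hp, one_mul, sum_add_distrib]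
  simp only [entropy]
  ring

theorem sum_mulVec_of_sum_eq_one (B : Matrix α β ℝ) (hB1 : ∀ y, ∑ x, B x y = 1) (p : β → ℝ) :
    ∑ x, (B *ᵥ p) x = ∑ y, p y := by
  simp only [mulVec, dotProduct]
  rw [sum_comm]
  simp only [← sum_mul, hB1, one_mul]

theorem mutualInfo_mulVec_le_add_log_card [Fintype ι] [Fintype κ] {w : ι → ℝ}
    (hw0 : ∀ j, 0 ≤ w j) (hw1 : ∑ j, w j = 1) {Q : ι → β → ℝ} (hQ0 : ∀ j y, 0 ≤ Q j y)
    (hQ1 : ∀ j, ∑ y, Q j y = 1) {A : ι → Matrix α β ℝ} (hA0 : ∀ j x y, 0 ≤ A j x y)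
    (hA1 : ∀ j y, ∑ x, A j x y = 1) (r : ι → κ) (hr : ∀ i j, r i = r j → A i = A j) :
    mutualInfo w (fun j => A j *ᵥ Q j) ≤ mutualInfo w Q + log (Fintype.card κ) := by
  classical
  have hmass : ∑ j, ∑ y, (w j • Q j) y = 1 := by
    simp only [Pi.smul_apply, smul_eq_mul, ← mul_sum, hQ1, mul_one, hw1]
  have h := entropy_sum_mulVec_sub_le_add_log_card (a := fun j => w j • Q j)
    (fun j y => mul_nonneg (hw0 j) (hQ0 j y)) hA0 hA1 r hr
  simp only [mulVec_smul, hmass, one_mul] at h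
  rw [mutualInfo_eq_add_entropy w fun j => sum_mulVec_of_sum_eq_one _ (hA1 j) _ |>.trans (hQ1 j),
    mutualInfo_eq_add_entropy w hQ1]
  linarith

theorem ent2_eq_entropy_div {n : ℕ} (v : Fin n → ℝ) : ent2 v = entropy v / log 2 := by
  simp only [ent2, entropy, negMulLog, logb, sum_div, ← sum_neg_distrib]
  exact sum_congr rfl fun i _ => by ring

theorem ent2_mixture_sub_eq_mutualInfo {ℓ n : ℕ} (P : Fin ℓ → Fin n → ℝ) :
    ent2 (fun x => (1 / (ℓ : ℝ)) * ∑ j, P j x) - (1 / (ℓ : ℝ)) * ∑ j, ent2 (P j)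
      = mutualInfo (fun _ => 1 / (ℓ : ℝ)) P / log 2 := by
  have hmix : (fun x => (1 / (ℓ : ℝ)) * ∑ j, P j x) = ∑ j, (1 / (ℓ : ℝ)) • P j := by
    ext x
    simp [mul_sum]
  simp only [mutualInfo, ent2_eq_entropy_div, hmix, ← mul_sum, ← sum_div]
  ring

theorem mutual_info_increase_bounded_by_log_classes_general
    (ℓ d nX nY : ℕ) (hℓ : 0 < ℓ)
    (Q : Fin ℓ → Fin nY → ℝ)
    (hQ0 : ∀ j y, 0 ≤ Q j y) (hQ1 : ∀ j, ∑ y, Q j y = 1)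
    (A : Fin ℓ → Matrix (Fin nX) (Fin nY) ℝ)
    (hA0 : ∀ j x y, 0 ≤ A j x y) (hA1 : ∀ j y, ∑ x, A j x y = 1)
    (B : Fin d → Matrix (Fin nX) (Fin nY) ℝ) (r : Fin ℓ → Fin d)
    (hclass : ∀ j, A j = B (r j)) :
    ent2 (fun x => (1 / (ℓ : ℝ)) * ∑ j, (A j).mulVec (Q j) x)
        - (1 / (ℓ : ℝ)) * ∑ j, ent2 ((A j).mulVec (Q j))
      ≤ ent2 (fun y => (1 / (ℓ : ℝ)) * ∑ j, Q j y)
          - (1 / (ℓ : ℝ)) * ∑ j, ent2 (Q j)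
        + Real.logb 2 d := by
  have hw1 : ∑ _j : Fin ℓ, 1 / (ℓ : ℝ) = 1 := by
    rw [sum_const, card_univ, Fintype.card_fin, nsmul_eq_mul]
    field_simp
  have hI := mutualInfo_mulVec_le_add_log_card (fun _ => by positivity) hw1 hQ0 hQ1 hA0 hA1 r
    fun i j h => by rw [hclass, hclass, h]
  rw [Fintype.card_fin] at hI
  rw [ent2_mixture_sub_eq_mutualInfo (fun j => A j *ᵥ Q j), ent2_mixture_sub_eq_mutualInfo,
    logb, ← add_div]
  exact div_le_div_of_nonneg_right hI (log_nonneg one_le_two)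

/-- If X is obtained from Y by applying a stochastic matrix A_j that depends on
the uniform index J = j only through d distinct values B_1,...,B_d, then
I(X:J) ≤ I(Y:J) + log₂ d. -/
theorem mutual_info_increase_bounded_by_log_classes
    (ℓ d nX nY : ℕ) (hℓ : 0 < ℓ) (hd : 0 < d)
    (Q : Fin ℓ → Fin nY → ℝ)
    (hQ0 : ∀ j y, 0 ≤ Q j y) (hQ1 : ∀ j, ∑ y, Q j y = 1)
    (A : Fin ℓ → Matrix (Fin nX) (Fin nY) ℝ)
    (hA0 : ∀ j x y, 0 ≤ A j x y) (hA1 : ∀ j y, ∑ x, A j x y = 1)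
    (B : Fin d → Matrix (Fin nX) (Fin nY) ℝ) (r : Fin ℓ → Fin d)
    (hclass : ∀ j, A j = B (r j)) :
    ent2 (fun x => (1 / (ℓ : ℝ)) * ∑ j, (A j).mulVec (Q j) x)
        - (1 / (ℓ : ℝ)) * ∑ j, ent2 ((A j).mulVec (Q j))
      ≤ ent2 (fun y => (1 / (ℓ : ℝ)) * ∑ j, Q j y)
          - (1 / (ℓ : ℝ)) * ∑ j, ent2 (Q j)
        + Real.logb 2 d :=
  mutual_info_increase_bounded_by_log_classes_general ℓ d nX nY hℓ Q hQ0 hQ1 A hA0 hA1 B r hclass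
end

section
/- Let p be a continuously differentiable, strictly positive probability density on ℝ with finite Fisher information F(p) = ∫ (p'(x)/p(x))² p(x) dx, and let q be a Gaussian density with variance v > 0. Then the convolution p * q satisfies F(p * q) ≤ F(p). -/
open Real MeasureTheory ProbabilityTheory ContinuousLinearMap
open scoped Convolution NNReal

/-!
Write `c = p ⋆ q`. Differentiating under the integral sign (the Gaussian and its derivative are
bounded) and integrating by parts gives `c' = p' ⋆ q`. For fixed `y`, with the score `s = p' / p`
and the weight `w x = p x * q (y - x)`, this reads `c' y = ∫ s w` and `c y = ∫ w`, so
Cauchy–Schwarz gives `c' y ^ 2 / c y ≤ ∫ s ^ 2 w = ((s ^ 2 * p) ⋆ q) y`. Integrating in `y`, Fubini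
and `∫ q = 1` turn the right-hand side into `∫ s ^ 2 * p = F(p)`.
-/

noncomputable def fisherInfo (f : ℝ → ℝ) : ℝ := ∫ x, (deriv f x / f x) ^ 2 * f x

lemma sq_integral_mul_le_integral_sq_mul_mul_integral {α : Type*} [MeasurableSpace α]
    {μ : Measure α} {s w : α → ℝ} (hw : 0 ≤ᵐ[μ] w) (hwi : Integrable w μ)
    (hswi : Integrable (fun x => s x * w x) μ) (hs2wi : Integrable (fun x => s x ^ 2 * w x) μ) :
    (∫ x, s x * w x ∂μ) ^ 2 ≤ (∫ x, s x ^ 2 * w x ∂μ) * ∫ x, w x ∂μ := by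
  have hquad : ∀ t : ℝ, 0 ≤ (∫ x, w x ∂μ) * (t * t) + (-2 * ∫ x, s x * w x ∂μ) * t
      + ∫ x, s x ^ 2 * w x ∂μ := by
    intro t
    have hexpand : ∫ x, (t - s x) ^ 2 * w x ∂μ = (∫ x, w x ∂μ) * (t * t)
        + (-2 * ∫ x, s x * w x ∂μ) * t + ∫ x, s x ^ 2 * w x ∂μ := by
      have hsplit : ∀ x, (t - s x) ^ 2 * w x
          = (t * t) * w x + (-2 * t) * (s x * w x) + s x ^ 2 * w x := fun x => by ring
      have hfirst : Integrable (fun x => (t * t) * w x + (-2 * t) * (s x * w x)) μ :=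
        (hwi.const_mul _).add (hswi.const_mul _)
      simp_rw [hsplit]
      rw [integral_add hfirst hs2wi, integral_add (hwi.const_mul _) (hswi.const_mul _),
        integral_const_mul, integral_const_mul]
      ring
    rw [← hexpand]
    exact integral_nonneg_of_ae (hw.mono fun x hx => mul_nonneg (sq_nonneg _) hx)
  have hdiscr := discrim_le_zero hquad
  rw [discrim] at hdiscr
  nlinarith

section Convolution

variable {f g : ℝ → ℝ} {B C : ℝ}

lemma deriv_eq_div_mul_self (hf0 : ∀ x, 0 ≤ f x) (x : ℝ) : deriv f x = deriv f x / f x * f x := by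
  rcases (hf0 x).eq_or_lt with hx | hx
  · have hmin : IsLocalMin f x := Filter.Eventually.of_forall fun y => hx ▸ hf0 y
    rw [hmin.deriv_eq_zero, zero_div, zero_mul]
  · rw [div_mul_cancel₀ _ hx.ne']

lemma integrable_deriv_of_integrable_fisher (hf0 : ∀ x, 0 ≤ f x) (hfi : Integrable f)
    (hF : Integrable fun x => (deriv f x / f x) ^ 2 * f x) : Integrable (deriv f) := by
  refine ((hF.add hfi).div_const 2).mono' (measurable_deriv f).aestronglyMeasurable
    (Filter.Eventually.of_forall fun x => ?_)
  show ‖deriv f x‖ ≤ ((deriv f x / f x) ^ 2 * f x + f x) / 2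
  conv_lhs => rw [Real.norm_eq_abs, deriv_eq_div_mul_self hf0 x, abs_mul, abs_of_nonneg (hf0 x)]
  rw [← sq_abs]
  nlinarith [mul_nonneg (sq_nonneg (|deriv f x / f x| - 1)) (hf0 x)]

lemma integrable_mul_comp_sub (hf : Integrable f) (hg : Measurable g) (hgB : ∀ x, |g x| ≤ B)
    (y : ℝ) : Integrable fun x => f x * g (y - x) :=
  hf.mul_bdd (hg.comp (measurable_const.sub measurable_id)).aestronglyMeasurable
    (Filter.Eventually.of_forall fun x => hgB (y - x))

lemma hasDerivAt_convolution_mul (hf : Integrable f) (hg : Differentiable ℝ g)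
    (hgB : ∀ x, |g x| ≤ B) (hg'C : ∀ x, |deriv g x| ≤ C) (y : ℝ) :
    HasDerivAt (f ⋆[mul ℝ ℝ] g) ((f ⋆[mul ℝ ℝ] deriv g) y) y := by
  have hdiff := hasDerivAt_integral_of_dominated_loc_of_deriv_le (μ := volume)
    (F := fun y x => f x * g (y - x)) (F' := fun y x => f x * deriv g (y - x))
    (bound := fun x => C * |f x|) (x₀ := y) Filter.univ_mem
    (Filter.Eventually.of_forall fun y' =>
      (integrable_mul_comp_sub hf hg.continuous.measurable hgB y').aestronglyMeasurable)
    (integrable_mul_comp_sub hf hg.continuous.measurable hgB y)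
    (integrable_mul_comp_sub hf (measurable_deriv g) hg'C y).aestronglyMeasurable
    (Filter.Eventually.of_forall fun x y' _ => ?_) (hf.abs.const_mul C)
    (Filter.Eventually.of_forall fun x y' _ =>
      ((hg (y' - x)).hasDerivAt.comp_sub_const y' x).const_mul (f x))
  · have hconv : ∀ h : ℝ → ℝ, f ⋆[mul ℝ ℝ] h = fun n => ∫ x, f x * h (n - x) :=
      fun h => funext fun n => convolution_mul
    rw [hconv, hconv]
    exact hdiff.2
  · rw [Real.norm_eq_abs, abs_mul, mul_comm]
    exact mul_le_mul_of_nonneg_right (hg'C _) (abs_nonneg _)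

lemma convolution_mul_deriv_right_eq_deriv_left (hf : Differentiable ℝ f) (hfi : Integrable f)
    (hf'i : Integrable (deriv f)) (hg : Differentiable ℝ g) (hgB : ∀ x, |g x| ≤ B)
    (hg'C : ∀ x, |deriv g x| ≤ C) (y : ℝ) :
    (f ⋆[mul ℝ ℝ] deriv g) y = (deriv f ⋆[mul ℝ ℝ] g) y := by
  have hparts := integral_mul_deriv_eq_deriv_mul_of_integrable
    (u := f) (v := fun x => g (y - x)) (v' := fun x => -deriv g (y - x))
    (fun x _ => (hf x).hasDerivAt) (fun x _ => (hg (y - x)).hasDerivAt.comp_const_sub y x)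
    ((integrable_mul_comp_sub hfi (measurable_deriv g) hg'C y).neg.congr
      (ae_of_all _ fun x => (mul_neg _ _).symm))
    (integrable_mul_comp_sub hf'i hg.continuous.measurable hgB y)
    (integrable_mul_comp_sub hfi hg.continuous.measurable hgB y)
  simp only [mul_neg, integral_neg, neg_inj] at hparts
  simpa only [convolution_mul] using hparts

lemma deriv_convolution_mul (hf : Differentiable ℝ f) (hfi : Integrable f)
    (hf'i : Integrable (deriv f)) (hg : Differentiable ℝ g) (hgB : ∀ x, |g x| ≤ B)
    (hg'C : ∀ x, |deriv g x| ≤ C) :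
    deriv (f ⋆[mul ℝ ℝ] g) = deriv f ⋆[mul ℝ ℝ] g := by
  ext y
  rw [(hasDerivAt_convolution_mul hfi hg hgB hg'C y).deriv,
    convolution_mul_deriv_right_eq_deriv_left hf hfi hf'i hg hgB hg'C y]

lemma sq_deriv_convolution_mul_le (hf0 : ∀ x, 0 ≤ f x) (hfi : Integrable f)
    (hF : Integrable fun x => (deriv f x / f x) ^ 2 * f x) (hg : Measurable g)
    (hg0 : ∀ x, 0 ≤ g x) (hgB : ∀ x, |g x| ≤ B) (y : ℝ) :
    (deriv f ⋆[mul ℝ ℝ] g) y ^ 2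
      ≤ ((fun x => (deriv f x / f x) ^ 2 * f x) ⋆[mul ℝ ℝ] g) y * (f ⋆[mul ℝ ℝ] g) y := by
  have hscore : ∀ x, deriv f x / f x * (f x * g (y - x)) = deriv f x * g (y - x) := fun x => by
    rw [← mul_assoc, ← deriv_eq_div_mul_self hf0]
  have hcs := sq_integral_mul_le_integral_sq_mul_mul_integral (μ := volume)
    (s := fun x => deriv f x / f x) (w := fun x => f x * g (y - x))
    (ae_of_all _ fun x => mul_nonneg (hf0 x) (hg0 _)) (integrable_mul_comp_sub hfi hg hgB y)
    (by simpa only [hscore] using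
      integrable_mul_comp_sub (integrable_deriv_of_integrable_fisher hf0 hfi hF) hg hgB y)
    (by simpa only [← mul_assoc] using integrable_mul_comp_sub hF hg hgB y)
  simp only [hscore, ← mul_assoc] at hcs
  simpa only [convolution_mul] using hcs

theorem fisherInfo_convolution_mul_le (hf : Differentiable ℝ f) (hf0 : ∀ x, 0 ≤ f x)
    (hfi : Integrable f) (hF : Integrable fun x => (deriv f x / f x) ^ 2 * f x)
    (hg : Differentiable ℝ g) (hg0 : ∀ x, 0 ≤ g x) (hg1 : ∫ x, g x = 1)
    (hgB : ∀ x, |g x| ≤ B) (hg'C : ∀ x, |deriv g x| ≤ C) :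
    fisherInfo (f ⋆[mul ℝ ℝ] g) ≤ fisherInfo f := by
  have hgi : Integrable g := .of_integral_ne_zero (by simp [hg1])
  have hderiv := deriv_convolution_mul hf hfi (integrable_deriv_of_integrable_fisher hf0 hfi hF)
    hg hgB hg'C
  have hconv0 : ∀ y, 0 ≤ (f ⋆[mul ℝ ℝ] g) y := fun y => by
    rw [convolution_mul]
    exact integral_nonneg fun x => mul_nonneg (hf0 x) (hg0 _)
  set F := fun x => (deriv f x / f x) ^ 2 * f x
  have hpointwise : ∀ y, (deriv (f ⋆[mul ℝ ℝ] g) y / (f ⋆[mul ℝ ℝ] g) y) ^ 2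
      * (f ⋆[mul ℝ ℝ] g) y ≤ (F ⋆[mul ℝ ℝ] g) y := fun y => by
    have hF0 : 0 ≤ (F ⋆[mul ℝ ℝ] g) y := by
      rw [convolution_mul]
      exact integral_nonneg fun x => mul_nonneg (mul_nonneg (sq_nonneg _) (hf0 x)) (hg0 _)
    -- `(d / c) ^ 2 * c = d ^ 2 / c` also when `c = 0`, both sides being `0` then
    rw [div_pow, sq ((f ⋆[mul ℝ ℝ] g) y), ← div_div,
      div_mul_cancel_of_imp fun h => by rw [h, div_zero], hderiv]
    exact div_le_of_le_mul₀ (hconv0 y) hF0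
      (sq_deriv_convolution_mul_le hf0 hfi hF hg.continuous.measurable hg0 hgB y)
  calc fisherInfo (f ⋆[mul ℝ ℝ] g) ≤ ∫ y, (F ⋆[mul ℝ ℝ] g) y :=
        integral_mono_of_nonneg (ae_of_all _ fun y => mul_nonneg (sq_nonneg _) (hconv0 y))
          (hF.integrable_convolution (mul ℝ ℝ) hgi) (ae_of_all _ hpointwise)
    _ = fisherInfo f := by
        rw [integral_convolution (mul ℝ ℝ) hF hgi, hg1, mul_apply', mul_one]
        rfl

end Convolution

lemma abs_mul_exp_neg_sq_div_le {w : ℝ} (hw : 0 < w) (u : ℝ) :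
    |u| * exp (-u ^ 2 / (2 * w)) ≤ (1 + 2 * w) / 2 := by
  have hexp := add_one_le_exp (u ^ 2 / (2 * w))
  have hu : 2 * w * (u ^ 2 / (2 * w)) = u ^ 2 := mul_div_cancel₀ _ (by positivity)
  have ht : 0 ≤ u ^ 2 / (2 * w) := by positivity
  rw [neg_div, exp_neg, ← div_eq_mul_inv, div_le_iff₀ (exp_pos _)]
  nlinarith [sq_nonneg (|u| - 1), sq_abs u,
    mul_le_mul_of_nonneg_left hexp (by positivity : (0 : ℝ) ≤ 1 + 2 * w)]

namespace ProbabilityTheory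

variable (μ : ℝ) (v : ℝ≥0)

lemma gaussianPDFReal_le (x : ℝ) : gaussianPDFReal μ v x ≤ (√(2 * π * v))⁻¹ := by
  rw [gaussianPDFReal]
  refine mul_le_of_le_one_right (by positivity) (exp_le_one_iff.2 ?_)
  rw [neg_div]
  exact neg_nonpos.2 (by positivity)

lemma hasDerivAt_gaussianPDFReal (x : ℝ) :
    HasDerivAt (gaussianPDFReal μ v) (-((x - μ) / v) * gaussianPDFReal μ v x) x := by
  have hexponent : HasDerivAt (fun y => -(y - μ) ^ 2 / (2 * v)) (-((x - μ) / v)) x :=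
    ((((hasDerivAt_id' x).sub_const μ).pow 2).neg.div_const (2 * (v : ℝ))).congr_deriv (by ring)
  exact (hexponent.exp.const_mul (√(2 * π * v))⁻¹).congr_deriv (by rw [gaussianPDFReal]; ring)

lemma differentiable_gaussianPDFReal : Differentiable ℝ (gaussianPDFReal μ v) :=
  fun x => (hasDerivAt_gaussianPDFReal μ v x).differentiableAt

lemma abs_deriv_gaussianPDFReal_le (hv : v ≠ 0) (x : ℝ) :
    |deriv (gaussianPDFReal μ v) x| ≤ (√(2 * π * v))⁻¹ * ((1 + 2 * v) / 2) / v := by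
  have hv' : (0 : ℝ) < v := NNReal.coe_pos.2 (pos_iff_ne_zero.2 hv)
  rw [(hasDerivAt_gaussianPDFReal μ v x).deriv, gaussianPDFReal, abs_mul, abs_neg, abs_div,
    abs_of_pos hv', abs_mul, abs_of_pos (by positivity : (0 : ℝ) < (√(2 * π * v))⁻¹),
    abs_of_pos (exp_pos _)]
  calc |x - μ| / v * ((√(2 * π * v))⁻¹ * exp (-(x - μ) ^ 2 / (2 * v)))
      = (√(2 * π * v))⁻¹ * (|x - μ| * exp (-(x - μ) ^ 2 / (2 * v))) / v := by ring
    _ ≤ (√(2 * π * v))⁻¹ * ((1 + 2 * v) / 2) / v := by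
        gcongr
        exact abs_mul_exp_neg_sq_div_le hv' (x - μ)

end ProbabilityTheory

/-- Convolution with a Gaussian density does not increase Fisher information. -/
theorem fisher_info_convolution_gaussian
    (p : ℝ → ℝ) (hp : ContDiff ℝ 1 p) (hp0 : ∀ x, 0 < p x)
    (hp1 : ∫ x, p x = 1)
    (hFp : Integrable (fun x => (deriv p x / p x) ^ 2 * p x))
    (v : ℝ) (hv : 0 < v) (m : ℝ)
    (q : ℝ → ℝ)
    (hq : ∀ y, q y = (1 / Real.sqrt (2 * π * v)) *
      Real.exp (-(y - m) ^ 2 / (2 * v)))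
    (c : ℝ → ℝ) (hc : ∀ y, c y = ∫ x, p x * q (y - x)) :
    ∫ y, (deriv c y / c y) ^ 2 * c y
      ≤ ∫ x, (deriv p x / p x) ^ 2 * p x := by
  set V : ℝ≥0 := ⟨v, hv.le⟩
  have hV : V ≠ 0 := ne_of_gt hv
  obtain rfl : q = gaussianPDFReal m V := funext fun y => by rw [hq, gaussianPDFReal, one_div]; rfl
  obtain rfl : c = p ⋆[mul ℝ ℝ] gaussianPDFReal m V := funext fun y => by rw [hc, convolution_mul]
  exact fisherInfo_convolution_mul_le (hp.differentiable one_ne_zero) (fun x => (hp0 x).le)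
    (.of_integral_ne_zero (by simp [hp1])) hFp (differentiable_gaussianPDFReal m V)
    (gaussianPDFReal_nonneg m V) (integral_gaussianPDFReal_eq_one m hV)
    (fun x => (abs_of_nonneg (gaussianPDFReal_nonneg m V x)).trans_le (gaussianPDFReal_le m V x))
    (abs_deriv_gaussianPDFReal_le m V hV)
end
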